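/- Let X, Y be finite sets, Θ compact, p(x,y|θ) continuous in θ, and assume for every x there exists θ with p(x|θ)>0. For any predictive density q, if there exists π̂ ∈ P with D_q(π̂) = inf_{π∈P} D_q(π) and p_{π̂}(x) > 0 for all x ∈ X, then R(θ, p_{π̂}(·|·)) ≤ R(θ, q) for every θ ∈ Θ; i.e., the Bayesian predictive density based on π̂ dominates (weakly) q. -/

import Mathlib

open MeasureTheory

noncomputable def pMix {Θ X Y : Type*} [MeasurableSpace Θ]
    (p : X → Y → Θ → ℝ) (π : ProbabilityMeasure Θ) (x : X) (y : Y) : ℝ :=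
  ∫ θ, p x y θ ∂(π : Measure Θ)

def IsPredDensity {X Y : Type*} [Fintype Y] (q : X → Y → ℝ) : Prop :=
  (∀ x y, 0 ≤ q x y ∧ q x y ≤ 1) ∧ ∀ x, ∑ y : Y, q x y = 1

/-- `a log(b/c)` with conventions `0 log 0 = 0`, `0 log(c/0) = 0`, `a log(b/0) = +∞` (a > 0). -/
noncomputable def klTerm (a b c : ℝ) : EReal :=
  if a = 0 then 0 else if c = 0 then ⊤ else ((a * Real.log (b / c) : ℝ) : EReal)

/-- KL risk `R(θ,q) = Σ_{x,y} p(x,y|θ) log( p(y|x,θ)/q(y;x) )`. -/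
noncomputable def risk {Θ X Y : Type*} [Fintype X] [Fintype Y]
    (p : X → Y → Θ → ℝ) (q : X → Y → ℝ) (θ : Θ) : EReal :=
  ∑ x : X, ∑ y : Y, klTerm (p x y θ) (p x y θ / ∑ y' : Y, p x y' θ) (q x y)

/-- `D_q(π) = Σ_{x,y} p_π(x,y) log( p_π(x,y)/(q(y;x) p_π(x)) )`. -/
noncomputable def Dq {Θ X Y : Type*} [MeasurableSpace Θ] [Fintype X] [Fintype Y]
    (p : X → Y → Θ → ℝ) (q : X → Y → ℝ) (π : ProbabilityMeasure Θ) : EReal :=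
  ∑ x : X, ∑ y : Y,
    klTerm (pMix p π x y) (pMix p π x y) (q x y * ∑ y' : Y, pMix p π x y')


/-!
Fix `θ` and move the prior from `π̂` towards the point mass at `θ` along
`π_ε = (1 - ε) π̂ + ε δ_θ`. Freezing the marginal `p_{π̂}(x)` inside `D_q(π_ε)` can only increase
it (the change is minus a KL divergence of marginals), so the frozen functional is also minimal at
`ε = 0`. A second-order bound for `A ↦ A log (A / w)` then shows that its right derivative at
`0`, namely `∑ (p(x,y|θ) - p_{π̂}(x,y)) (log (p_{π̂}(x,y) / (q(y;x) p_{π̂}(x))) + 1)`, is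
nonnegative, while an entry with `p_{π̂}(x,y) = 0 < p(x,y|θ)` would contribute `ε log ε` and make
it `-∞`. As both joint densities have mass one, this says
`R(θ, q) - R(θ, p_{π̂}) = ∑ p(x,y|θ) log (p_{π̂}(y|x) / q(y;x)) ≥ D_q(π̂)`, and `D_q(π̂) ≥ 0` by
Gibbs' inequality.
-/

open Filter Set Topology
open Real (log)

theorem sub_le_mul_log_div {u v : ℝ} (hu : 0 ≤ u) (hv : 0 ≤ v) (huv : 0 < u → 0 < v) :
    u - v ≤ u * log (u / v) := by
  rcases hu.eq_or_lt with rfl | hu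
  · simpa using hv
  have h := Real.one_sub_inv_le_log_of_pos (div_pos hu (huv hu))
  rw [inv_div] at h
  calc u - v = u * (1 - v / u) := by field_simp
    _ ≤ u * log (u / v) := mul_le_mul_of_nonneg_left h hu.le

theorem sum_sub_le_sum_mul_log_div {ι : Type*} (s : Finset ι) {u v : ι → ℝ}
    (hu : ∀ i, 0 ≤ u i) (hv : ∀ i, 0 ≤ v i) (huv : ∀ i, 0 < u i → 0 < v i) :
    ∑ i ∈ s, u i - ∑ i ∈ s, v i ≤ ∑ i ∈ s, u i * log (u i / v i) := by
  rw [← Finset.sum_sub_distrib]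
  exact Finset.sum_le_sum fun i _ => sub_le_mul_log_div (hu i) (hv i) (huv i)

theorem mul_log_div_le {a A w : ℝ} (ha : 0 < a) (hw : 0 < w) (hA : 0 ≤ A) :
    A * log (A / w) ≤
      a * log (a / w) + (A - a) * (log (a / w) + 1) + (A - a) ^ 2 / a := by
  have hsplit : A * log (A / w) = A * log (A / a) + A * log (a / w) := by
    rcases hA.eq_or_lt with rfl | hA
    · simp
    rw [← mul_add, ← Real.log_mul (by positivity) (by positivity)]
    field_simp
  have hlog : A * log (A / a) ≤ A * (A / a - 1) := by
    rcases hA.eq_or_lt with rfl | hA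
    · simp
    exact mul_le_mul_of_nonneg_left (Real.log_le_sub_one_of_pos (by positivity)) hA.le
  have hsq : A * (A / a - 1) = (A - a) + (A - a) ^ 2 / a := by
    field_simp
    ring
  linarith

theorem mul_log_div_segment_sub_le {a a' w ε : ℝ} (ha : 0 < a) (ha' : 0 ≤ a') (hw : 0 < w)
    (hε0 : 0 ≤ ε) (hε1 : ε ≤ 1) :
    ((1 - ε) * a + ε * a') * log (((1 - ε) * a + ε * a') / w) - a * log (a / w) ≤
      ε * ((a' - a) * (log (a / w) + 1)) + ε ^ 2 * ((a' - a) ^ 2 / a) := by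
  have h := mul_log_div_le ha hw (show 0 ≤ (1 - ε) * a + ε * a' by nlinarith)
  rw [show (1 - ε) * a + ε * a' - a = ε * (a' - a) by ring,
    show (ε * (a' - a)) ^ 2 / a = ε ^ 2 * ((a' - a) ^ 2 / a) by ring] at h
  linarith

theorem mul_mul_log_mul_div {c w ε : ℝ} (hε : 0 < ε) (hc : 0 ≤ c) (hcw : 0 < c → 0 < w) :
    ε * c * log (ε * c / w) = ε * (c * log (c / w) + c * log ε) := by
  rcases hc.eq_or_lt with rfl | hc
  · simp
  rw [mul_div_assoc, Real.log_mul hε.ne' (div_pos hc (hcw hc)).ne']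
  ring

theorem pos_or_pos_of_convex_comb_pos {a a' ε : ℝ} (hε0 : 0 ≤ ε) (hε1 : ε ≤ 1)
    (h : 0 < (1 - ε) * a + ε * a') : 0 < a ∨ 0 < a' := by
  by_contra! h'
  nlinarith [h'.1, h'.2]

theorem eq_zero_and_nonneg_of_forall_nonneg_add_mul_log {α β s : ℝ} (hs : 0 ≤ s)
    (h : ∀ ε ∈ Ioo (0 : ℝ) 1, 0 ≤ α + ε * β + s * log ε) : s = 0 ∧ 0 ≤ α := by
  have hev : ∀ᶠ ε in 𝓝[>] (0 : ℝ), 0 ≤ α + ε * β + s * log ε :=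
    eventually_of_mem (Ioo_mem_nhdsGT one_pos) h
  have hlin : Tendsto (fun ε : ℝ => α + ε * β) (𝓝[>] 0) (𝓝 α) := by
    have : Tendsto (fun ε : ℝ => α + ε * β) (𝓝 0) (𝓝 (α + 0 * β)) :=
      tendsto_const_nhds.add (tendsto_id.mul_const β)
    simpa using this.mono_left nhdsWithin_le_nhds
  have hs0 : s = 0 := by
    by_contra hne
    have hbot := hlin.add_atBot
      (Real.tendsto_log_nhdsGT_zero.const_mul_atBot (lt_of_le_of_ne hs (Ne.symm hne)))
    obtain ⟨ε, hε, hneg⟩ := (hev.and (hbot.eventually_lt_atBot 0)).exists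
    linarith
  subst hs0
  exact ⟨rfl, ge_of_tendsto hlin (hev.mono fun ε hε => by simpa using hε)⟩

theorem firstOrder_of_sum_mul_log_div_le_segment {ι : Type*} [Fintype ι] {a a' w : ι → ℝ}
    (ha : ∀ i, 0 ≤ a i) (ha' : ∀ i, 0 ≤ a' i) (hw : ∀ i, 0 < a i ∨ 0 < a' i → 0 < w i)
    (hmin : ∀ ε ∈ Ioo (0 : ℝ) 1, ∑ i, a i * log (a i / w i) ≤
      ∑ i, ((1 - ε) * a i + ε * a' i) * log (((1 - ε) * a i + ε * a' i) / w i)) :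
    (∀ i, 0 < a' i → 0 < a i) ∧ 0 ≤ ∑ i, (a' i - a i) * (log (a i / w i) + 1) := by
  classical
  set P := Finset.univ.filter fun i => 0 < a i
  set D := fun i => (a' i - a i) * (log (a i / w i) + 1)
  set C := fun i => (a' i - a i) ^ 2 / a i
  set α := ∑ i ∈ P, D i + ∑ i ∈ Pᶜ, a' i * log (a' i / w i)
  set s := ∑ i ∈ Pᶜ, a' i
  have hzero : ∀ i ∈ Pᶜ, a i = 0 := fun i hi =>
    ((ha i).antisymm (not_lt.1 (by simpa [P] using hi))).symm
  -- Off the support of `a` the variation is `ε a' log (ε a' / w)`, whose `ε log ε` part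
  -- dominates as `ε → 0`; this is what forces `s = 0`.
  have hbound : ∀ ε ∈ Ioo (0 : ℝ) 1, 0 ≤ α + ε * ∑ i ∈ P, C i + s * log ε := by
    intro ε hε
    set ψ := fun c i => c * log (c / w i)
    have hsum : 0 ≤ ∑ i, (ψ ((1 - ε) * a i + ε * a' i) i - ψ (a i) i) := by
      simpa [Finset.sum_sub_distrib, ψ] using hmin ε hε
    have hnull : ∀ i ∈ Pᶜ, ψ ((1 - ε) * a i + ε * a' i) i - ψ (a i) i =
        ε * (a' i * log (a' i / w i) + a' i * log ε) := fun i hi => by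
      simpa [ψ, hzero i hi] using mul_mul_log_mul_div hε.1 (ha' i) fun h => hw i (Or.inr h)
    rw [← Finset.sum_add_sum_compl P, Finset.sum_congr rfl hnull] at hsum
    refine (mul_nonneg_iff_of_pos_left hε.1).1 (hsum.trans ?_)
    calc _ ≤ ∑ i ∈ P, (ε * D i + ε ^ 2 * C i) +
          ∑ i ∈ Pᶜ, ε * (a' i * log (a' i / w i) + a' i * log ε) := by
          gcongr with i hi
          have hai : 0 < a i := by simpa [P] using hi
          exact mul_log_div_segment_sub_le hai (ha' i) (hw i (Or.inl hai)) hε.1.le hε.2.le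
      _ = ε * (α + ε * ∑ i ∈ P, C i + s * log ε) := by
          simp only [α, s, Finset.sum_add_distrib, ← Finset.mul_sum, Finset.sum_mul]
          ring
  obtain ⟨hs, hα⟩ := eq_zero_and_nonneg_of_forall_nonneg_add_mul_log
    (Finset.sum_nonneg fun i _ => ha' i) hbound
  have hnull : ∀ i ∈ Pᶜ, a' i = 0 := (Finset.sum_eq_zero_iff_of_nonneg fun i _ => ha' i).1 hs
  refine ⟨fun i hi => ?_, ?_⟩
  · by_contra h
    exact hi.ne' (hnull i (by simpa [P] using h))
  · calc 0 ≤ α := hα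
      _ = ∑ i ∈ P, D i + ∑ i ∈ Pᶜ, D i := by
        refine congrArg _ (Finset.sum_congr rfl fun i hi => ?_)
        simp [D, hnull i hi, hzero i hi]
      _ = ∑ i, D i := Finset.sum_add_sum_compl P D

section CondKL

variable {X Y : Type*} [Fintype X] [Fintype Y] {q a c : X → Y → ℝ}

/-- The real-valued `D_q`, as a function of the joint density `a = p_π`. -/
noncomputable def condKL (q a : X → Y → ℝ) : ℝ :=
  ∑ x, ∑ y, a x y * log (a x y / (q x y * ∑ y', a x y'))

theorem condKL_nonneg (ha : ∀ x y, 0 ≤ a x y) (hq : ∀ x y, 0 ≤ q x y)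
    (hq1 : ∀ x, ∑ y, q x y = 1) (hqa : ∀ x y, 0 < a x y → 0 < q x y) :
    0 ≤ condKL q a := by
  refine Finset.sum_nonneg fun x _ => ?_
  have h := sum_sub_le_sum_mul_log_div Finset.univ (ha x)
    (fun y => mul_nonneg (hq x y) (Finset.sum_nonneg fun y' _ => ha x y'))
    (fun y hy => mul_pos (hqa x y hy)
      (hy.trans_le (Finset.single_le_sum (fun y' _ => ha x y') (Finset.mem_univ y))))
  rwa [← Finset.sum_mul, hq1, one_mul, sub_self] at h

theorem condKL_le_sum_mul_log_div (hc : ∀ x y, 0 ≤ c x y) (ha : ∀ x, 0 < ∑ y, a x y)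
    (hqc : ∀ x y, 0 < c x y → 0 < q x y) (hmass : ∑ x, ∑ y, c x y = ∑ x, ∑ y, a x y) :
    condKL q c ≤ ∑ x, ∑ y, c x y * log (c x y / (q x y * ∑ y', a x y')) := by
  set B := fun x => ∑ y, c x y
  set b := fun x => ∑ y, a x y
  have hterm : ∀ x y, c x y * log (c x y / (q x y * B x)) =
      c x y * log (c x y / (q x y * b x)) - c x y * log (B x / b x) := by
    intro x y
    rcases (hc x y).eq_or_lt with h | h
    · simp [← h]
    have hB : 0 < B x :=
      h.trans_le (Finset.single_le_sum (fun y' _ => hc x y') (Finset.mem_univ y))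
    have hq := hqc x y h
    have hb : 0 < b x := ha x
    rw [← mul_sub, ← Real.log_div (by positivity) (by positivity)]
    congr 2
    field_simp
  have hmarg : 0 ≤ ∑ x, B x * log (B x / b x) := by
    have h := sum_sub_le_sum_mul_log_div Finset.univ (u := B) (v := b)
      (fun x => Finset.sum_nonneg fun y _ => hc x y) (fun x => (ha x).le) (fun x _ => ha x)
    rwa [hmass, sub_self] at h
  have hsplit : condKL q c = ∑ x, ∑ y, c x y * log (c x y / (q x y * b x)) -
      ∑ x, B x * log (B x / b x) := by
    simp only [condKL, hterm, Finset.sum_sub_distrib, ← Finset.sum_mul, B]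
  linarith

theorem firstOrder_of_condKL_le_segment {a' : X → Y → ℝ} (ha : ∀ x y, 0 ≤ a x y)
    (ha' : ∀ x y, 0 ≤ a' x y) (hb : ∀ x, 0 < ∑ y, a x y)
    (hq : ∀ x y, 0 < a x y ∨ 0 < a' x y → 0 < q x y)
    (hmass : ∑ x, ∑ y, a' x y = ∑ x, ∑ y, a x y)
    (hmin : ∀ ε ∈ Ioo (0 : ℝ) 1,
      condKL q a ≤ condKL q fun x y => (1 - ε) * a x y + ε * a' x y) :
    (∀ x y, 0 < a' x y → 0 < a x y) ∧
      condKL q a ≤ ∑ x, ∑ y, a' x y * log (a x y / (q x y * ∑ y', a x y')) := by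
  set w : X × Y → ℝ := fun z => q z.1 z.2 * ∑ y', a z.1 y'
  have hmin' : ∀ ε ∈ Ioo (0 : ℝ) 1, ∑ z : X × Y, a z.1 z.2 * log (a z.1 z.2 / w z) ≤
      ∑ z : X × Y, ((1 - ε) * a z.1 z.2 + ε * a' z.1 z.2) *
        log (((1 - ε) * a z.1 z.2 + ε * a' z.1 z.2) / w z) := by
    intro ε hε
    simp only [Fintype.sum_prod_type, w]
    refine (hmin ε hε).trans (condKL_le_sum_mul_log_div
      (fun x y => by nlinarith [ha x y, ha' x y, hε.1, hε.2]) hb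
      (fun x y h => hq x y (pos_or_pos_of_convex_comb_pos hε.1.le hε.2.le h)) ?_)
    simp only [Finset.sum_add_distrib, ← Finset.mul_sum, hmass]
    ring
  obtain ⟨hsupp, hfirst⟩ := firstOrder_of_sum_mul_log_div_le_segment
    (fun z : X × Y => ha z.1 z.2) (fun z : X × Y => ha' z.1 z.2)
    (fun z hz => mul_pos (hq z.1 z.2 hz) (hb z.1)) hmin'
  refine ⟨fun x y h => hsupp (x, y) h, ?_⟩
  simp only [Fintype.sum_prod_type, sub_mul, mul_add, mul_one, Finset.sum_sub_distrib,
    Finset.sum_add_distrib, hmass] at hfirst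
  unfold condKL
  linarith

end CondKL

theorem EReal.sum_ne_bot {ι : Type*} {s : Finset ι} {f : ι → EReal} (h : ∀ i ∈ s, f i ≠ ⊥) :
    ∑ i ∈ s, f i ≠ ⊥ :=
  Finset.sum_induction f (· ≠ ⊥) (fun _ _ ha hb => EReal.add_ne_bot_iff.2 ⟨ha, hb⟩)
    EReal.zero_ne_bot h

theorem EReal.sum_eq_top_of_mem {ι : Type*} {s : Finset ι} {f : ι → EReal}
    (h : ∀ i ∈ s, f i ≠ ⊥) {i : ι} (hi : i ∈ s) (htop : f i = ⊤) : ∑ j ∈ s, f j = ⊤ := by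
  classical
  rw [← Finset.add_sum_erase s f hi, htop]
  exact EReal.top_add_of_ne_bot (EReal.sum_ne_bot fun j hj => h j (Finset.mem_of_mem_erase hj))

theorem EReal.coe_finset_sum {ι : Type*} (s : Finset ι) (f : ι → ℝ) :
    ((∑ i ∈ s, f i : ℝ) : EReal) = ∑ i ∈ s, (f i : EReal) :=
  map_sum (⟨⟨(↑), EReal.coe_zero⟩, EReal.coe_add⟩ : ℝ →+ EReal) f s

section KLTerm

variable {X Y : Type*} [Fintype X] [Fintype Y] {f g h : X → Y → ℝ}

theorem klTerm_ne_bot (a b c : ℝ) : klTerm a b c ≠ ⊥ := by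
  unfold klTerm
  split_ifs
  · exact EReal.zero_ne_bot
  · exact top_ne_bot
  · exact_mod_cast EReal.coe_ne_bot (a * log (b / c))

theorem klTerm_eq_coe {a c : ℝ} (h : a ≠ 0 → c ≠ 0) (b : ℝ) :
    klTerm a b c = ((a * log (b / c) : ℝ) : EReal) := by
  unfold klTerm
  split_ifs with ha hc
  · simp [ha]
  · exact absurd hc (h ha)
  · rfl

theorem sum_klTerm_eq_coe (hfh : ∀ x y, f x y ≠ 0 → h x y ≠ 0) :
    ∑ x, ∑ y, klTerm (f x y) (g x y) (h x y) =
      ((∑ x, ∑ y, f x y * log (g x y / h x y) : ℝ) : EReal) := by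
  simp only [EReal.coe_finset_sum, klTerm_eq_coe (hfh _ _)]

theorem ne_zero_of_sum_klTerm_ne_top (hfin : ∑ x, ∑ y, klTerm (f x y) (g x y) (h x y) ≠ ⊤)
    {x : X} {y : Y} (hf : f x y ≠ 0) : h x y ≠ 0 := by
  intro hh
  refine hfin (EReal.sum_eq_top_of_mem
    (fun x _ => EReal.sum_ne_bot fun y _ => klTerm_ne_bot _ _ _) (Finset.mem_univ x)
    (EReal.sum_eq_top_of_mem (fun y _ => klTerm_ne_bot _ _ _) (Finset.mem_univ y) ?_))
  simp [klTerm, hf, hh]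

end KLTerm

section Risk

variable {Θ X Y : Type*} [Fintype X] [Fintype Y] {p : X → Y → Θ → ℝ} {q q' : X → Y → ℝ}

theorem pos_of_risk_ne_top (hq : ∀ x y, 0 ≤ q x y) {θ : Θ} (hR : risk p q θ ≠ ⊤)
    {x : X} {y : Y} (h : 0 < p x y θ) : 0 < q x y :=
  (hq x y).lt_of_ne' (ne_zero_of_sum_klTerm_ne_top hR h.ne')

theorem risk_le_risk_of_sum_mul_log_nonneg (hp : ∀ x y θ, 0 ≤ p x y θ) {θ : Θ}
    (hq : ∀ x y, 0 < p x y θ → 0 < q x y) (hq' : ∀ x y, 0 < p x y θ → 0 < q' x y)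
    (h : 0 ≤ ∑ x, ∑ y, p x y θ * log (q' x y / q x y)) : risk p q' θ ≤ risk p q θ := by
  rw [risk, risk, sum_klTerm_eq_coe fun x y h => (hq' x y ((hp x y θ).lt_of_ne' h)).ne',
    sum_klTerm_eq_coe fun x y h => (hq x y ((hp x y θ).lt_of_ne' h)).ne', EReal.coe_le_coe_iff,
    ← sub_nonneg, ← Finset.sum_sub_distrib]
  refine h.trans_eq (Finset.sum_congr rfl fun x _ => ?_)
  rw [← Finset.sum_sub_distrib]
  refine Finset.sum_congr rfl fun y _ => ?_
  rcases (hp x y θ).eq_or_lt with h0 | hpos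
  · simp [← h0]
  have hb : 0 < ∑ y', p x y' θ :=
    hpos.trans_le (Finset.single_le_sum (fun y' _ => hp x y' θ) (Finset.mem_univ y))
  have := hq x y hpos
  have := hq' x y hpos
  rw [← mul_sub, ← Real.log_div (by positivity) (by positivity)]
  congr 2
  field_simp

end Risk

theorem ProbabilityMeasure.exists_integral_eq_convex_comb {Θ : Type*} [MeasurableSpace Θ]
    (μ ν : ProbabilityMeasure Θ) {t : ℝ} (ht0 : 0 ≤ t) (ht1 : t ≤ 1) :
    ∃ π : ProbabilityMeasure Θ, ∀ f : Θ → ℝ, Integrable f μ → Integrable f ν →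
      ∫ θ, f θ ∂π = (1 - t) * ∫ θ, f θ ∂μ + t * ∫ θ, f θ ∂ν := by
  set m : Measure Θ :=
    ENNReal.ofReal (1 - t) • (μ : Measure Θ) + ENNReal.ofReal t • (ν : Measure Θ)
  have hm : IsProbabilityMeasure m := ⟨by
    simp [m, ← ENNReal.ofReal_add (sub_nonneg.2 ht1) ht0]⟩
  refine ⟨⟨m, hm⟩, fun f hμ hν => ?_⟩
  change ∫ θ, f θ ∂m = _
  rw [integral_add_measure (hμ.smul_measure ENNReal.ofReal_ne_top)
      (hν.smul_measure ENNReal.ofReal_ne_top), integral_smul_measure, integral_smul_measure,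
    ENNReal.toReal_ofReal (sub_nonneg.2 ht1), ENNReal.toReal_ofReal ht0, smul_eq_mul, smul_eq_mul]

section Bayes

variable {Θ X Y : Type*} [MeasurableSpace Θ] {p : X → Y → Θ → ℝ}

theorem pMix_nonneg (hp : ∀ x y θ, 0 ≤ p x y θ) (π : ProbabilityMeasure Θ) (x : X) (y : Y) :
    0 ≤ pMix p π x y :=
  integral_nonneg (hp x y)

theorem exists_pMix_eq_convex_comb [MeasurableSingletonClass Θ]
    (hint : ∀ x y (π : ProbabilityMeasure Θ), Integrable (p x y) π) (π₀ : ProbabilityMeasure Θ)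
    (θ : Θ) {ε : ℝ} (hε : ε ∈ Icc (0 : ℝ) 1) :
    ∃ π : ProbabilityMeasure Θ,
      pMix p π = fun x y => (1 - ε) * pMix p π₀ x y + ε * p x y θ := by
  obtain ⟨π, hπ⟩ := ProbabilityMeasure.exists_integral_eq_convex_comb π₀
    ⟨Measure.dirac θ, inferInstance⟩ hε.1 hε.2
  exact ⟨π, funext₂ fun x y => (hπ _ (hint x y _) (hint x y _)).trans (by simp [pMix])⟩

variable [Fintype X] [Fintype Y] {q : X → Y → ℝ}

theorem sum_pMix_eq_one {π : ProbabilityMeasure Θ} (hint : ∀ x y, Integrable (p x y) π)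
    (hsum : ∀ θ, ∑ x, ∑ y, p x y θ = 1) : ∑ x, ∑ y, pMix p π x y = 1 := by
  simp only [pMix]
  rw [Finset.sum_congr rfl fun x _ => (integral_finsetSum _ fun y _ => hint x y).symm,
    ← integral_finsetSum _ fun x _ => integrable_finsetSum _ fun y _ => hint x y]
  simp [hsum]

theorem Dq_eq_coe_condKL (hp : ∀ x y θ, 0 ≤ p x y θ) {π : ProbabilityMeasure Θ}
    (hq : ∀ x y, 0 < pMix p π x y → 0 < q x y) : Dq p q π = (condKL q (pMix p π) : EReal) :=
  sum_klTerm_eq_coe fun x y h => by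
    have ha := (pMix_nonneg hp π x y).lt_of_ne' h
    exact mul_ne_zero (hq x y ha).ne' (ha.trans_le
      (Finset.single_le_sum (fun y' _ => pMix_nonneg hp π x y') (Finset.mem_univ y))).ne'

theorem Dq_ne_top (hp : ∀ x y θ, 0 ≤ p x y θ) {π : ProbabilityMeasure Θ}
    (hq : ∀ x y, 0 < pMix p π x y → 0 < q x y) : Dq p q π ≠ ⊤ := by
  rw [Dq_eq_coe_condKL hp hq]
  exact EReal.coe_ne_top _

theorem pos_of_Dq_ne_top (hq : ∀ x y, 0 ≤ q x y) {π : ProbabilityMeasure Θ} (hD : Dq p q π ≠ ⊤)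
    {x : X} {y : Y} (h : 0 < pMix p π x y) : 0 < q x y :=
  (hq x y).lt_of_ne' (left_ne_zero_of_mul (ne_zero_of_sum_klTerm_ne_top hD h.ne'))

theorem condKL_le_of_Dq_le (hp : ∀ x y θ, 0 ≤ p x y θ) {π₀ π : ProbabilityMeasure Θ}
    (hq₀ : ∀ x y, 0 < pMix p π₀ x y → 0 < q x y) (hq : ∀ x y, 0 < pMix p π x y → 0 < q x y)
    (h : Dq p q π₀ ≤ Dq p q π) : condKL q (pMix p π₀) ≤ condKL q (pMix p π) := by
  rwa [Dq_eq_coe_condKL hp hq₀, Dq_eq_coe_condKL hp hq, EReal.coe_le_coe_iff] at h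

end Bayes

theorem Dq_minimizer_dominates_general
    {Θ X Y : Type*} [MetricSpace Θ] [CompactSpace Θ] [MeasurableSpace Θ] [BorelSpace Θ]
    [Fintype X] [Fintype Y]
    (p : X → Y → Θ → ℝ)
    (hc : ∀ x y, Continuous (p x y))
    (hnn : ∀ x y θ, 0 ≤ p x y θ)
    (hsum : ∀ θ : Θ, ∑ x : X, ∑ y : Y, p x y θ = 1)
    (q : X → Y → ℝ) (hq : IsPredDensity q)
    (πhat : ProbabilityMeasure Θ)
    (hminDq : ∀ π : ProbabilityMeasure Θ, Dq p q πhat ≤ Dq p q π)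
    (hpos : ∀ x : X, 0 < ∑ y : Y, pMix p πhat x y) :
    ∀ θ : Θ,
      risk p (fun x y => pMix p πhat x y / ∑ y' : Y, pMix p πhat x y') θ
        ≤ risk p q θ := by
  intro θ
  rcases eq_or_ne (risk p q θ) ⊤ with hR | hR
  · exact hR ▸ le_top
  have hq0 : ∀ x y, 0 ≤ q x y := fun x y => (hq.1 x y).1
  have hqθ : ∀ x y, 0 < p x y θ → 0 < q x y := fun x y => pos_of_risk_ne_top hq0 hR
  have hint : ∀ x y (π : ProbabilityMeasure Θ), Integrable (p x y) π := fun x y π =>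
    (BoundedContinuousFunction.mkOfCompact ⟨p x y, hc x y⟩).integrable _
  have hmix := fun ε (hε : ε ∈ Icc (0 : ℝ) 1) => exists_pMix_eq_convex_comb hint πhat θ hε
  obtain ⟨πθ, hπθ⟩ := hmix 1 ⟨zero_le_one, le_rfl⟩
  have hqa : ∀ x y, 0 < pMix p πhat x y → 0 < q x y := fun x y => pos_of_Dq_ne_top hq0
    (ne_top_of_le_ne_top (Dq_ne_top hnn fun x y h => hqθ x y (by simpa [hπθ] using h))
      (hminDq πθ))
  have hmin : ∀ ε ∈ Ioo (0 : ℝ) 1, condKL q (pMix p πhat) ≤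
      condKL q fun x y => (1 - ε) * pMix p πhat x y + ε * p x y θ := fun ε hε => by
    obtain ⟨π, hπ⟩ := hmix ε (Ioo_subset_Icc_self hε)
    refine hπ ▸ condKL_le_of_Dq_le hnn hqa (fun x y h => ?_) (hminDq π)
    exact (pos_or_pos_of_convex_comb_pos hε.1.le hε.2.le (by rwa [hπ] at h)).elim
      (hqa x y) (hqθ x y)
  obtain ⟨hsupp, hle⟩ := firstOrder_of_condKL_le_segment (pMix_nonneg hnn πhat)
    (fun x y => hnn x y θ) hpos (fun x y h => h.elim (hqa x y) (hqθ x y))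
    (by rw [sum_pMix_eq_one (hint · · πhat) hsum, hsum]) hmin
  refine risk_le_risk_of_sum_mul_log_nonneg hnn hqθ
    (fun x y h => div_pos (hsupp x y h) (hpos x)) ?_
  calc 0 ≤ condKL q (pMix p πhat) := condKL_nonneg (pMix_nonneg hnn πhat) hq0 hq.2 hqa
    _ ≤ _ := hle
    _ = _ := by simp_rw [div_div, mul_comm (q _ _)]

/-- Theorem 1, part 2: if `π̂` minimizes `D_q` over all priors and `p_{π̂}(x) > 0` for all `x`,
then the Bayesian predictive density based on `π̂` weakly dominates `q`. -/
theorem Dq_minimizer_dominates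
    {Θ X Y : Type*} [MetricSpace Θ] [CompactSpace Θ] [MeasurableSpace Θ] [BorelSpace Θ]
    [Fintype X] [Fintype Y]
    (p : X → Y → Θ → ℝ)
    (hc : ∀ x y, Continuous (p x y))
    (hnn : ∀ x y θ, 0 ≤ p x y θ)
    (hsum : ∀ θ : Θ, ∑ x : X, ∑ y : Y, p x y θ = 1)
    (hx : ∀ x : X, ∃ θ : Θ, 0 < ∑ y : Y, p x y θ)
    (q : X → Y → ℝ) (hq : IsPredDensity q)
    (πhat : ProbabilityMeasure Θ)
    (hminDq : ∀ π : ProbabilityMeasure Θ, Dq p q πhat ≤ Dq p q π)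
    (hpos : ∀ x : X, 0 < ∑ y : Y, pMix p πhat x y) :
    ∀ θ : Θ,
      risk p (fun x y => pMix p πhat x y / ∑ y' : Y, pMix p πhat x y') θ
        ≤ risk p q θ :=
  Dq_minimizer_dominates_general p hc hnn hsum q hq πhat hminDq hpos
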